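/- Let n ≥ 2 be an even integer. Then there exists exactly one real number x in the open interval (-2,-1) such that x^n (x+2)^n + x (1+x)^{2n} = 0. -/

import Mathlib

/-!
For even `n` and `-2 ≤ x ≤ -1`, write `s = (1 + x)²`, so that `x (x + 2) = s - 1` and
`x^n (x+2)^n + x (1+x)^(2n) = (1 - s)^n + x s^n`. As `x` increases, `s` decreases from `1` to `0`,
so `(1 - s)^n` increases strictly, and `x s^n` increases since `x ≤ 0` grows while `s^n ≥ 0`
shrinks. The function is thus strictly increasing on `[-2, -1]`, from `-2` to `1`, and the
intermediate value theorem gives exactly one zero.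
-/

open Set

theorem existsUnique_mem_Ioo_eq_of_strictMonoOn {α δ : Type*} [ConditionallyCompleteLinearOrder α]
    [TopologicalSpace α] [OrderTopology α] [DenselyOrdered α] [LinearOrder δ] [TopologicalSpace δ]
    [OrderClosedTopology δ] {f : α → δ} {a b : α} {c : δ} (hab : a ≤ b)
    (hcont : ContinuousOn f (Icc a b)) (hmono : StrictMonoOn f (Icc a b))
    (ha : f a < c) (hb : c < f b) : ∃! x, x ∈ Ioo a b ∧ f x = c := by
  obtain ⟨x, hx, hfx⟩ := intermediate_value_Ioo hab hcont ⟨ha, hb⟩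
  refine ⟨x, ⟨hx, hfx⟩, fun y ⟨hy, hfy⟩ => ?_⟩
  exact hmono.injOn (Ioo_subset_Icc_self hy) (Ioo_subset_Icc_self hx) (hfy.trans hfx.symm)

/-- The domination polynomial `D(F_n, x)` of the friendship graph `F_n`. -/
def friendshipDomPoly (n : ℕ) (x : ℝ) : ℝ :=
  x ^ n * (x + 2) ^ n + x * (1 + x) ^ (2 * n)

namespace friendshipDomPoly

variable {n : ℕ}

theorem continuous (n : ℕ) : Continuous (friendshipDomPoly n) := by
  unfold friendshipDomPoly
  fun_prop

theorem eq_of_even (hn : Even n) (x : ℝ) :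
    friendshipDomPoly n x = (1 - (1 + x) ^ 2) ^ n + x * ((1 + x) ^ 2) ^ n := by
  have hprod : x * (x + 2) = -(1 - (1 + x) ^ 2) := by ring
  rw [friendshipDomPoly, ← mul_pow, hprod, hn.neg_pow, pow_mul]

theorem apply_neg_two (hn : n ≠ 0) : friendshipDomPoly n (-2) = -2 := by
  norm_num [friendshipDomPoly, zero_pow hn, (even_two_mul n).neg_one_pow]

theorem apply_neg_one (hn : Even n) (hn0 : n ≠ 0) : friendshipDomPoly n (-1) = 1 := by
  norm_num [friendshipDomPoly, hn.neg_one_pow, zero_pow (mul_ne_zero two_ne_zero hn0)]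

theorem strictMonoOn_Icc (hn : Even n) (hn0 : n ≠ 0) :
    StrictMonoOn (friendshipDomPoly n) (Icc (-2) (-1)) := by
  intro a ⟨ha2, _⟩ b ⟨_, hb1⟩ hab
  rw [eq_of_even hn, eq_of_even hn]
  have hsq : (1 + b) ^ 2 < (1 + a) ^ 2 := by nlinarith
  have hfirst : (1 - (1 + a) ^ 2) ^ n < (1 - (1 + b) ^ 2) ^ n :=
    pow_lt_pow_left₀ (by linarith) (by nlinarith) hn0
  have hsecond : a * ((1 + a) ^ 2) ^ n ≤ b * ((1 + b) ^ 2) ^ n :=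
    calc a * ((1 + a) ^ 2) ^ n
        ≤ b * ((1 + a) ^ 2) ^ n := by gcongr
      _ ≤ b * ((1 + b) ^ 2) ^ n :=
        mul_le_mul_of_nonpos_left (pow_le_pow_left₀ (by positivity) hsq.le n) (by linarith)
  linarith

end friendshipDomPoly

/-- For even `n ≥ 2`, there is exactly one `x ∈ (-2,-1)` with
`x^n (x+2)^n + x (1+x)^(2n) = 0`. -/
theorem friendship_unique_root_in_Ioo_neg_two_neg_one (n : ℕ) (hn : 2 ≤ n) (hne : Even n) :
    ∃! x : ℝ, x ∈ Set.Ioo (-2 : ℝ) (-1) ∧ x ^ n * (x + 2) ^ n + x * (1 + x) ^ (2 * n) = 0 := by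
  have hn0 : n ≠ 0 := by omega
  exact existsUnique_mem_Ioo_eq_of_strictMonoOn (f := friendshipDomPoly n) (by norm_num)
    (friendshipDomPoly.continuous n).continuousOn (friendshipDomPoly.strictMonoOn_Icc hne hn0)
    (by rw [friendshipDomPoly.apply_neg_two hn0]; norm_num)
    (by rw [friendshipDomPoly.apply_neg_one hne hn0]; norm_num)
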